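/- In the polynomial ring ℂ[α,β,γ,δ], suppose f ∈ (δ²+β−2, γ^k) (the ideal generated by δ²+β−2 and γ^k) and deg f < 6k, where the grading assigns deg α = deg δ = 2, deg β = 4, deg γ = 6. Then f ∈ (δ²+β−2). -/

import Mathlib

/-!
Substituting `β ↦ 2 - δ²` is a ring endomorphism `ψ` that kills `δ² + β - 2`, fixes `γ`,
and is the identity modulo `(δ² + β - 2)`; since `β` and `δ²` both have weight `4`, it does
not raise the weighted degree. Writing `f = a (δ² + β - 2) + b γ^k`, we get
`ψ f = ψ b · γ^k`, which is either zero or of weighted degree at least `6k > deg f ≥ deg ψ f`.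
Hence `ψ f = 0` and `f ≡ ψ f = 0`.
-/

open MvPolynomial

namespace MvPolynomial

section WeightedTotalDegree

variable {R σ : Type*} [CommSemiring R] (w : σ → ℕ)

theorem weightedTotalDegree_le_iff {p : MvPolynomial σ R} {n : ℕ} :
    p.weightedTotalDegree w ≤ n ↔ ∀ d ∈ p.support, Finsupp.weight w d ≤ n :=
  Finset.sup_le_iff

theorem weightedTotalDegree_monomial_le (d : σ →₀ ℕ) (c : R) :
    (monomial d c).weightedTotalDegree w ≤ Finsupp.weight w d := by
  classical
  rw [weightedTotalDegree_le_iff]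
  intro e he
  rw [Finset.mem_singleton.mp (support_monomial_subset he)]

theorem weightedTotalDegree_C (c : R) : (C c : MvPolynomial σ R).weightedTotalDegree w = 0 :=
  Nat.le_zero.mp (by simpa using weightedTotalDegree_monomial_le w 0 c)

theorem weightedTotalDegree_X_pow_le (i : σ) (k : ℕ) :
    (X i ^ k : MvPolynomial σ R).weightedTotalDegree w ≤ k * w i := by
  simpa [X_pow_eq_monomial, Finsupp.weight_single] using
    weightedTotalDegree_monomial_le w (Finsupp.single i k) (1 : R)

theorem weightedTotalDegree_X_le (i : σ) :
    (X i : MvPolynomial σ R).weightedTotalDegree w ≤ w i := by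
  simpa using weightedTotalDegree_X_pow_le (R := R) w i 1

theorem weightedTotalDegree_add_le (p q : MvPolynomial σ R) :
    (p + q).weightedTotalDegree w ≤ max (p.weightedTotalDegree w) (q.weightedTotalDegree w) := by
  classical
  rw [weightedTotalDegree_le_iff]
  intro d hd
  rcases Finset.mem_union.mp (support_add hd) with h | h
  · exact le_max_of_le_left (le_weightedTotalDegree w h)
  · exact le_max_of_le_right (le_weightedTotalDegree w h)

theorem weightedTotalDegree_sum_le {ι : Type*} {s : Finset ι} {p : ι → MvPolynomial σ R}
    {n : ℕ} (h : ∀ i ∈ s, (p i).weightedTotalDegree w ≤ n) :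
    (∑ i ∈ s, p i).weightedTotalDegree w ≤ n := by
  classical
  rw [weightedTotalDegree_le_iff]
  intro d hd
  obtain ⟨i, hi, hd⟩ := Finset.mem_biUnion.mp (support_sum hd)
  exact (le_weightedTotalDegree w hd).trans (h i hi)

theorem weightedTotalDegree_mul_le (p q : MvPolynomial σ R) :
    (p * q).weightedTotalDegree w ≤ p.weightedTotalDegree w + q.weightedTotalDegree w := by
  classical
  rw [weightedTotalDegree_le_iff]
  intro d hd
  obtain ⟨a, ha, b, hb, rfl⟩ := Finset.mem_add.mp (support_mul p q hd)
  rw [map_add]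
  exact add_le_add (le_weightedTotalDegree w ha) (le_weightedTotalDegree w hb)

theorem weightedTotalDegree_prod_le {ι : Type*} (s : Finset ι) (p : ι → MvPolynomial σ R) :
    (∏ i ∈ s, p i).weightedTotalDegree w ≤ ∑ i ∈ s, (p i).weightedTotalDegree w := by
  classical
  induction s using Finset.induction with
  | empty => simpa using (weightedTotalDegree_C (σ := σ) w (1 : R)).le
  | insert i s hi ih =>
    rw [Finset.prod_insert hi, Finset.sum_insert hi]
    exact (weightedTotalDegree_mul_le w _ _).trans (by gcongr)

theorem weightedTotalDegree_pow_le (p : MvPolynomial σ R) (k : ℕ) :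
    (p ^ k).weightedTotalDegree w ≤ k * p.weightedTotalDegree w := by
  simpa using weightedTotalDegree_prod_le w (Finset.range k) fun _ => p

theorem weightedTotalDegree_aeval_le {τ : Type*} (v : τ → ℕ) {g : σ → MvPolynomial τ R}
    (hg : ∀ i, (g i).weightedTotalDegree v ≤ w i) (f : MvPolynomial σ R) :
    (aeval g f).weightedTotalDegree v ≤ f.weightedTotalDegree w := by
  conv_lhs => rw [f.as_sum, map_sum]
  refine weightedTotalDegree_sum_le v fun d hd => le_trans ?_ (le_weightedTotalDegree w hd)
  rw [aeval_monomial, algebraMap_eq, Finsupp.prod, Finsupp.weight_apply, Finsupp.sum]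
  refine (weightedTotalDegree_mul_le v _ _).trans ?_
  rw [weightedTotalDegree_C, zero_add]
  refine (weightedTotalDegree_prod_le v _ _).trans (Finset.sum_le_sum fun i _ => ?_)
  rw [smul_eq_mul]
  exact (weightedTotalDegree_pow_le v _ _).trans (Nat.mul_le_mul_left _ (hg i))

theorem le_weightedTotalDegree_of_X_pow_dvd {p : MvPolynomial σ R} (hp : p ≠ 0) {i : σ}
    {k : ℕ} (h : X i ^ k ∣ p) : k * w i ≤ p.weightedTotalDegree w := by
  obtain ⟨q, rfl⟩ := h
  obtain ⟨d, hd⟩ := support_nonempty.mpr (right_ne_zero_of_mul hp)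
  have hmem : Finsupp.single i k + d ∈ (X i ^ k * q).support := by
    rwa [mem_support_iff, X_pow_eq_monomial, coeff_monomial_mul, one_mul, ← mem_support_iff]
  calc k * w i ≤ Finsupp.weight w (Finsupp.single i k + d) := by
        simp [Finsupp.weight_single]
    _ ≤ _ := le_weightedTotalDegree w hmem

end WeightedTotalDegree

theorem weightedTotalDegree_sub_le {R σ : Type*} [CommRing R] (w : σ → ℕ)
    (p q : MvPolynomial σ R) :
    (p - q).weightedTotalDegree w ≤ max (p.weightedTotalDegree w) (q.weightedTotalDegree w) := by
  simpa [sub_eq_add_neg, weightedTotalDegree] using weightedTotalDegree_add_le w p (-q)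

theorem sub_aeval_mem_of_forall_X_sub_mem {R σ : Type*} [CommRing R]
    {I : Ideal (MvPolynomial σ R)} {g : σ → MvPolynomial σ R} (hg : ∀ i, X i - g i ∈ I)
    (f : MvPolynomial σ R) : f - aeval g f ∈ I := by
  have hcomp : (Ideal.Quotient.mkₐ R I).comp (aeval g) = Ideal.Quotient.mkₐ R I :=
    algHom_ext fun i => by simpa using (Ideal.Quotient.eq.mpr (hg i)).symm
  exact Ideal.Quotient.eq.mp (AlgHom.congr_fun hcomp f).symm

end MvPolynomial

noncomputable def substBeta : Fin 4 → MvPolynomial (Fin 4) ℂ :=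
  ![X 0, 2 - X 3 ^ 2, X 2, X 3]

theorem X_sub_substBeta_mem (i : Fin 4) :
    X i - substBeta i ∈ Ideal.span {(X 3 : MvPolynomial (Fin 4) ℂ) ^ 2 + X 1 - 2} := by
  fin_cases i
  · simp [substBeta]
  · exact Ideal.subset_span (by simp [substBeta]; ring)
  · simp [substBeta]
  · simp [substBeta]

theorem weightedTotalDegree_substBeta_le (i : Fin 4) :
    (substBeta i).weightedTotalDegree ![2, 4, 6, 2] ≤ ![2, 4, 6, 2] i := by
  fin_cases i
  · exact weightedTotalDegree_X_le _ 0
  · refine (weightedTotalDegree_sub_le _ _ _).trans (max_le ?_ ?_)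
    · simp [← map_ofNat C, weightedTotalDegree_C]
    · exact weightedTotalDegree_X_pow_le _ 3 2
  · exact weightedTotalDegree_X_le _ 2
  · exact weightedTotalDegree_X_le _ 3

theorem X_pow_dvd_aeval_substBeta {f : MvPolynomial (Fin 4) ℂ} {k : ℕ}
    (hf : f ∈ Ideal.span {(X 3 : MvPolynomial (Fin 4) ℂ) ^ 2 + X 1 - 2, X 2 ^ k}) :
    X 2 ^ k ∣ aeval substBeta f := by
  obtain ⟨a, b, rfl⟩ := Ideal.mem_span_pair.mp hf
  have hrel : aeval substBeta ((X 3 : MvPolynomial (Fin 4) ℂ) ^ 2 + X 1 - 2) = 0 := by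
    rw [map_sub, map_add, map_pow, aeval_X, aeval_X, map_ofNat]
    change X 3 ^ 2 + (2 - X 3 ^ 2) - 2 = (0 : MvPolynomial (Fin 4) ℂ)
    ring
  rw [map_add, map_mul, hrel, mul_zero, zero_add, map_mul, map_pow, aeval_X]
  exact dvd_mul_left _ _

theorem stmt11 (k : ℕ) (f : MvPolynomial (Fin 4) ℂ)
    (hf : f ∈ Ideal.span {(X 3 : MvPolynomial (Fin 4) ℂ) ^ 2 + X 1 - 2, X 2 ^ k})
    (hdeg : f.weightedTotalDegree ![2, 4, 6, 2] < 6 * k) :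
    f ∈ Ideal.span {(X 3 : MvPolynomial (Fin 4) ℂ) ^ 2 + X 1 - 2} := by
  have hsubst_zero : aeval substBeta f = 0 := by
    by_contra h
    have hlow := le_weightedTotalDegree_of_X_pow_dvd ![2, 4, 6, 2] h (X_pow_dvd_aeval_substBeta hf)
    have hup := weightedTotalDegree_aeval_le _ _ weightedTotalDegree_substBeta_le f
    change k * 6 ≤ _ at hlow
    omega
  simpa only [hsubst_zero, sub_zero] using sub_aeval_mem_of_forall_X_sub_mem X_sub_substBeta_mem f
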